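/- arXiv:2107.08612 — 5 statements merged into one kernel-verified Lean document; each statement's English description precedes it below -/
import Mathlib

section
/- Let V be a preadditive symmetric monoidal category with finite biproducts in which the tensor product is additive in each variable, and let 𝒢 be a family of objects of V each of which has a right dual. Assume that every object of V that has a right dual admits a split epimorphism from a finite biproduct of members of 𝒢. Then for all objects A, B of V and every morphism z : 𝟙 ⟶ A ⊗ B, the following are equivalent: (1) there exist an object P with a right dual Pᘁ and morphisms x : P ⟶ A, y : Pᘁ ⟶ B such that z = (x ⊗ y) ∘ η_P; (2) there exist a natural number n, objects P₁, …, Pₙ belonging to 𝒢, and morphisms xᵢ : Pᵢ ⟶ A, yᵢ : Pᵢᘁ ⟶ B such that z = Σᵢ (xᵢ ⊗ yᵢ) ∘ η_{Pᵢ}, the sum being taken in the preadditive structure. -/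
open CategoryTheory CategoryTheory.Limits CategoryTheory.MonoidalCategory

universe v u w

noncomputable section
namespace FlatUnitAux

variable {V : Type u} [Category.{v} V] [MonoidalCategory V] [Preadditive V]
  [MonoidalPreadditive V] [HasFiniteBiproducts V]

theorem key1 {n : ℕ} (P : Fin n → V) [∀ i, HasRightDual (P i)] (j i : Fin n) :
    (⨁ fun i : Fin n => ((P i)ᘁ : V)) ◁ η_ (P i) ((P i)ᘁ) ≫
      (⨁ fun i : Fin n => ((P i)ᘁ : V)) ◁
          (biproduct.ι P i ⊗ₘ biproduct.ι (fun i : Fin n => ((P i)ᘁ : V)) i) ≫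
        (α_ (⨁ fun i : Fin n => ((P i)ᘁ : V)) (⨁ P) (⨁ fun i : Fin n => ((P i)ᘁ : V))).inv ≫
          ((biproduct.π (fun i : Fin n => ((P i)ᘁ : V)) j ⊗ₘ biproduct.π P j) ▷
              (⨁ fun i : Fin n => ((P i)ᘁ : V))) ≫
            ε_ (P j) ((P j)ᘁ) ▷ (⨁ fun i : Fin n => ((P i)ᘁ : V)) =
    if i = j then
      (ρ_ (⨁ fun i : Fin n => ((P i)ᘁ : V))).hom ≫ biproduct.π (fun i : Fin n => ((P i)ᘁ : V)) i ≫
        biproduct.ι (fun i : Fin n => ((P i)ᘁ : V)) i ≫ (λ_ (⨁ fun i : Fin n => ((P i)ᘁ : V))).inv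
    else 0 := by
  rw [← MonoidalCategory.id_tensorHom, ← MonoidalCategory.id_tensorHom,
    ← MonoidalCategory.tensorHom_id, ← MonoidalCategory.tensorHom_id,
    associator_inv_naturality_assoc, tensorHom_comp_tensorHom_assoc, tensorHom_comp_tensorHom, tensorHom_comp_tensorHom]
  simp only [Category.id_comp, Category.comp_id, biproduct.ι_π]
  by_cases h : i = j
  · subst h
    simp only [dif_pos rfl, eqToHom_refl]
    simp only [if_true, dite_true]
    simp [MonoidalCategory.tensorHom_def]
    rw [← associator_inv_naturality_left_assoc, whisker_exchange_assoc]
    simp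
  · rw [if_neg h, dif_neg h]
    simp

theorem key2 {n : ℕ} (P : Fin n → V) [∀ i, HasRightDual (P i)] (j i : Fin n) :
    (η_ (P i) ((P i)ᘁ) ≫ (biproduct.ι P i ⊗ₘ biproduct.ι (fun i : Fin n => ((P i)ᘁ : V)) i)) ▷
        (⨁ P) ≫
      (α_ (⨁ P) (⨁ fun i : Fin n => ((P i)ᘁ : V)) (⨁ P)).hom ≫
        (⨁ P) ◁ ((biproduct.π (fun i : Fin n => ((P i)ᘁ : V)) j ⊗ₘ biproduct.π P j) ≫
          ε_ (P j) ((P j)ᘁ)) =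
    if i = j then
      (λ_ (⨁ P)).hom ≫ biproduct.π P i ≫ biproduct.ι P i ≫ (ρ_ (⨁ P)).inv
    else 0 := by
  rw [comp_whiskerRight, MonoidalCategory.whiskerLeft_comp, Category.assoc,
    ← MonoidalCategory.tensorHom_id, ← MonoidalCategory.tensorHom_id,
    ← MonoidalCategory.id_tensorHom, ← MonoidalCategory.id_tensorHom,
    associator_naturality_assoc]
  simp only [tensorHom_comp_tensorHom_assoc, tensorHom_comp_tensorHom, Category.id_comp, Category.comp_id,
    biproduct.ι_π]
  by_cases h : i = j
  · subst h
    simp only [dif_pos rfl, eqToHom_refl, if_true, dite_true]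
    simp [tensorHom_def']
    rw [← associator_naturality_right_assoc, ← whisker_exchange_assoc]
    simp
  · rw [if_neg h, dif_neg h]
    simp

/-- The biproduct of a family of objects with right duals has a right dual, given by the
biproduct of the duals, with coevaluation and evaluation given by sums. -/
def biproductPairing {n : ℕ} (P : Fin n → V) [∀ i, HasRightDual (P i)] :
    ExactPairing (⨁ P) (⨁ fun i : Fin n => ((P i)ᘁ : V)) where
  coevaluation' :=
    ∑ i, η_ (P i) ((P i)ᘁ) ≫ (biproduct.ι P i ⊗ₘ biproduct.ι (fun i : Fin n => ((P i)ᘁ : V)) i)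
  evaluation' :=
    ∑ i, (biproduct.π (fun i : Fin n => ((P i)ᘁ : V)) i ⊗ₘ biproduct.π P i) ≫ ε_ (P i) ((P i)ᘁ)
  coevaluation_evaluation' := by
    simp only [whiskerLeft_sum, sum_whiskerRight, Preadditive.sum_comp, Preadditive.comp_sum,
      MonoidalCategory.whiskerLeft_comp, comp_whiskerRight, Category.assoc]
    calc
      _ = ∑ j : Fin n, ∑ i : Fin n,
            if i = j then
              (ρ_ (⨁ fun i : Fin n => ((P i)ᘁ : V))).hom ≫
                biproduct.π (fun i : Fin n => ((P i)ᘁ : V)) i ≫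
                  biproduct.ι (fun i : Fin n => ((P i)ᘁ : V)) i ≫
                    (λ_ (⨁ fun i : Fin n => ((P i)ᘁ : V))).inv
            else 0 :=
        Finset.sum_congr rfl fun j _ => Finset.sum_congr rfl fun i _ => key1 P j i
      _ = _ := by
        simp only [Finset.sum_ite_eq, Finset.sum_ite_eq', Finset.mem_univ, if_true]
        rw [← Preadditive.comp_sum]
        congr 1
        simp only [← Category.assoc, ← Preadditive.sum_comp, biproduct.total, Category.id_comp]
  evaluation_coevaluation' := by
    simp only [sum_whiskerRight, whiskerLeft_sum, Preadditive.sum_comp, Preadditive.comp_sum]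
    calc
      _ = ∑ i : Fin n, ∑ j : Fin n,
            if j = i then
              (λ_ (⨁ P)).hom ≫ biproduct.π P j ≫ biproduct.ι P j ≫ (ρ_ (⨁ P)).inv
            else 0 :=
        Finset.sum_congr rfl fun i _ => Finset.sum_congr rfl fun j _ => key2 P i j
      _ = _ := by
        simp only [Finset.sum_ite_eq, Finset.sum_ite_eq', Finset.mem_univ, if_true]
        rw [← Preadditive.comp_sum]
        congr 1
        simp only [← Category.assoc, ← Preadditive.sum_comp, biproduct.total, Category.id_comp]

end FlatUnitAux
end

open FlatUnitAux

/-- The equivalence of conditions (d) and (d*) for a locally dualizable base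
(Proposition 4.4 of the paper). -/
theorem flat_unit_factorization_iff_sum_of_generators
    {V : Type u} [Category.{v} V] [MonoidalCategory V] [SymmetricCategory V]
    [Preadditive V] [MonoidalPreadditive V] [HasFiniteBiproducts V]
    {ι : Type w} (𝒢 : ι → V) [∀ i, HasRightDual (𝒢 i)]
    (hcover : ∀ (Q : V), HasRightDual Q →
      ∃ (n : ℕ) (j : Fin n → ι) (e : (⨁ fun i : Fin n => 𝒢 (j i)) ⟶ Q),
        IsSplitEpi e)
    (A B : V) (z : 𝟙_ V ⟶ A ⊗ B) :
    (∃ (P Pd : V) (e : ExactPairing P Pd) (x : P ⟶ A) (y : Pd ⟶ B),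
        z = @ExactPairing.coevaluation V _ _ P Pd e ≫ (x ⊗ₘ y)) ↔
      (∃ (n : ℕ) (j : Fin n → ι) (x : ∀ i, 𝒢 (j i) ⟶ A) (y : ∀ i, ((𝒢 (j i))ᘁ : V) ⟶ B),
        z = ∑ i : Fin n, η_ (𝒢 (j i)) ((𝒢 (j i))ᘁ) ≫ (x i ⊗ₘ y i)) := by
  constructor
  · rintro ⟨P, Pd, e, x, y, rfl⟩
    letI : ExactPairing P Pd := e
    letI hP : HasRightDual P := ⟨Pd⟩
    obtain ⟨n, j, f, hf⟩ := hcover P hP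
    letI : ExactPairing (⨁ fun i : Fin n => 𝒢 (j i))
        (⨁ fun i : Fin n => ((𝒢 (j i))ᘁ : V)) := biproductPairing _
    letI hQ : HasRightDual (⨁ fun i : Fin n => 𝒢 (j i)) :=
      ⟨⨁ fun i : Fin n => ((𝒢 (j i))ᘁ : V)⟩
    obtain ⟨s, hs⟩ := hf
    refine ⟨n, j, fun i => biproduct.ι (fun i : Fin n => 𝒢 (j i)) i ≫ f ≫ x,
      fun i => biproduct.ι (fun i : Fin n => ((𝒢 (j i))ᘁ : V)) i ≫ (rightAdjointMate s) ≫ y, ?_⟩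
    have e1 : (x ⊗ₘ y) = (s ▷ Pd) ≫ ((f ≫ x) ⊗ₘ y) := by
      rw [← MonoidalCategory.tensorHom_id, tensorHom_comp_tensorHom, Category.id_comp, ← Category.assoc,
        hs, Category.id_comp]
    rw [e1]
    have e2 : η_ P Pd ≫ (s ▷ Pd) ≫ ((f ≫ x) ⊗ₘ y) =
        η_ (⨁ fun i : Fin n => 𝒢 (j i)) ((⨁ fun i : Fin n => 𝒢 (j i))ᘁ) ≫
          ((⨁ fun i : Fin n => 𝒢 (j i)) ◁ (rightAdjointMate s)) ≫ ((f ≫ x) ⊗ₘ y) := by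
      rw [coevaluation_comp_rightAdjointMate_assoc s]; rfl
    rw [e2]
    have e3 : ((⨁ fun i : Fin n => 𝒢 (j i)) ◁ (rightAdjointMate s)) ≫ ((f ≫ x) ⊗ₘ y) =
        ((f ≫ x) ⊗ₘ ((rightAdjointMate s) ≫ y)) := by
      rw [← MonoidalCategory.id_tensorHom, tensorHom_comp_tensorHom, Category.id_comp]
    rw [e3]
    have e4 : η_ (⨁ fun i : Fin n => 𝒢 (j i)) ((⨁ fun i : Fin n => 𝒢 (j i))ᘁ) =
        ∑ i, η_ (𝒢 (j i)) ((𝒢 (j i))ᘁ) ≫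
          (biproduct.ι (fun i : Fin n => 𝒢 (j i)) i ⊗ₘ
            biproduct.ι (fun i : Fin n => ((𝒢 (j i))ᘁ : V)) i) := rfl
    rw [e4, Preadditive.sum_comp]
    exact Finset.sum_congr rfl fun i _ => by rw [Category.assoc, tensorHom_comp_tensorHom]
  · rintro ⟨n, j, x, y, rfl⟩
    refine ⟨⨁ fun i : Fin n => 𝒢 (j i), ⨁ fun i : Fin n => ((𝒢 (j i))ᘁ : V),
      biproductPairing _, biproduct.desc x, biproduct.desc y, ?_⟩
    have e4 : @ExactPairing.coevaluation V _ _ _ _ (biproductPairing (fun i : Fin n => 𝒢 (j i))) =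
        ∑ i, η_ (𝒢 (j i)) ((𝒢 (j i))ᘁ) ≫
          (biproduct.ι (fun i : Fin n => 𝒢 (j i)) i ⊗ₘ
            biproduct.ι (fun i : Fin n => ((𝒢 (j i))ᘁ : V)) i) := rfl
    rw [e4, Preadditive.sum_comp]
    exact Finset.sum_congr rfl fun i _ => by
      rw [Category.assoc, tensorHom_comp_tensorHom, biproduct.ι_desc, biproduct.ι_desc]
end

section
/- Let J : B ⥤ C be a fully faithful functor between small categories and let M : Bᵒᵖ ⥤ Type be a presheaf. If the left Kan extension of M along Jᵒᵖ : Bᵒᵖ ⥤ Cᵒᵖ is an ind-object, then M is an ind-object. -/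
open CategoryTheory CategoryTheory.Limits Opposite

universe u

namespace IndLanAux

variable {B C : Type u} [SmallCategory B] [SmallCategory C] (J : B ⥤ C)

namespace Presheaf

/-- `J ⋙ yoneda` is naturally isomorphic to `yoneda ⋙ J.op.lan`. -/
noncomputable def compYonedaIsoYonedaCompLan :
    J ⋙ yoneda ≅ yoneda ⋙ J.op.lan :=
  NatIso.ofComponents (fun X => Functor.leftKanExtensionUnique _
    (yonedaMap J X) (J.op.lan.obj _) (J.op.lanUnit.app (yoneda.obj X)))
    (fun {X Y} f => by
      apply yonedaEquiv.injective
      have eq₁ := ConcreteCategory.congr_hom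
        ((yoneda.obj (J.obj Y)).descOfIsLeftKanExtension_fac_app
        (yonedaMap J Y) (J.op.lan.obj (yoneda.obj Y))
          (J.op.lanUnit.app (yoneda.obj Y)) _) f
      have eq₂ := ConcreteCategory.congr_hom (CC := fun X ↦ X)
        (((yoneda.obj (J.obj X)).descOfIsLeftKanExtension_fac_app
        (yonedaMap J X) (J.op.lan.obj (yoneda.obj X))
          (J.op.lanUnit.app (yoneda.obj X))) _) (𝟙 _)
      have eq₃ := ConcreteCategory.congr_hom (CC := fun X ↦ X) (congr_app (J.op.lanUnit.naturality
        (yoneda.map f)) _) (𝟙 _)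
      simp only [yonedaMap_app_apply] at eq₁ eq₂
      simp only [Functor.id_map, Functor.comp_map, NatTrans.comp_app] at eq₃
      rw [yonedaEquiv_comp, yonedaEquiv_comp]
      simp only [Functor.leftKanExtensionUnique, Functor.leftKanExtensionUniqueOfIso] at *
      simp only [Iso.refl_hom, Category.id_comp]
      simp only [ConcreteCategory.comp_apply] at eq₁ eq₂ eq₃
      have e1 : yonedaEquiv ((J ⋙ yoneda).map f) = (yonedaMap J Y).app (op X) f := by
        simp [yonedaEquiv, yonedaMap]
      have e2 : yonedaEquiv ((yoneda.obj (J.obj X)).descOfIsLeftKanExtension (yonedaMap J X) (J.op.lan.obj (yoneda.obj X))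
          (J.op.lanUnit.app (yoneda.obj X))) = ((yoneda.obj (J.obj X)).descOfIsLeftKanExtension (yonedaMap J X) (J.op.lan.obj (yoneda.obj X))
                (J.op.lanUnit.app (yoneda.obj X))).app (J.op.obj (op X)) ((yonedaMap J X).app (op X) (𝟙 X)) := by
        simp [yonedaEquiv, yonedaMap]
      have e3 : (yoneda.map f).app (op X) (𝟙 X) = f := by simp
      rw [e1, e2, eq₂]
      refine Eq.trans eq₁ ?_
      refine Eq.trans (congrArg _ e3.symm) ?_
      rw [eq₃]
      rfl)

end Presheaf

/-- Auxiliary functor transporting costructured arrows along the isomorphism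
`J ⋙ yoneda ≅ yoneda ⋙ J.op.lan`. -/
noncomputable def phiMid (M : Bᵒᵖ ⥤ Type u) :
    CostructuredArrow (yoneda ⋙ J.op.lan) ((J.op.lan).obj M) ⥤
      CostructuredArrow (J ⋙ yoneda) ((J.op.lan).obj M) :=
  (Comma.mapLeftIso _ (Presheaf.compYonedaIsoYonedaCompLan J)).inverse

instance (M : Bᵒᵖ ⥤ Type u) : (phiMid J M).Faithful := by
  unfold phiMid; exact inferInstance

instance (M : Bᵒᵖ ⥤ Type u) : (phiMid J M).Full := by
  unfold phiMid; exact inferInstance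

/-- The comparison functor from elements of `M` to elements of its left Kan extension. -/
noncomputable def phi (M : Bᵒᵖ ⥤ Type u) :
    CostructuredArrow yoneda M ⥤ CostructuredArrow yoneda ((J.op.lan).obj M) :=
  CostructuredArrow.post yoneda J.op.lan M ⋙ phiMid J M ⋙
    CostructuredArrow.pre J yoneda ((J.op.lan).obj M)

lemma phi_obj_hom (M : Bᵒᵖ ⥤ Type u) (e : CostructuredArrow yoneda M) :
    ((phi J M).obj e).hom =
      (((Presheaf.compYonedaIsoYonedaCompLan J).hom.app e.left ≫ J.op.lan.map e.hom :
        yoneda.obj (J.obj e.left) ⟶ (J.op.lan).obj M)) := rfl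

section
variable [J.Full] [J.Faithful]

noncomputable instance : (J.op.lan (H := Type u)).Full :=
  ((J.op.lanAdjunction (Type u)).fullyFaithfulLOfIsIsoUnit).full

noncomputable instance : (J.op.lan (H := Type u)).Faithful :=
  ((J.op.lanAdjunction (Type u)).fullyFaithfulLOfIsIsoUnit).faithful

noncomputable instance (M : Bᵒᵖ ⥤ Type u) : (phi J M).Faithful := by
  unfold phi; infer_instance

noncomputable instance (M : Bᵒᵖ ⥤ Type u) : (phi J M).Full := by
  unfold phi; infer_instance

end

lemma yonedaEquiv_unit_comp (M : Bᵒᵖ ⥤ Type u) (b : B) (s : yoneda.obj b ⟶ M) :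
    yonedaEquiv (((Presheaf.compYonedaIsoYonedaCompLan J).hom.app b ≫ J.op.lan.map s :
        yoneda.obj (J.obj b) ⟶ (J.op.lan).obj M))
      = (J.op.lanUnit.app M).app (op b) (yonedaEquiv s) := by
  rw [yonedaEquiv_comp]
  have h1 : yonedaEquiv ((Presheaf.compYonedaIsoYonedaCompLan J).hom.app b :
      yoneda.obj (J.obj b) ⟶ (J.op.lan).obj (yoneda.obj b))
      = (J.op.lanUnit.app (yoneda.obj b)).app (op b) (𝟙 b) := by
    have := ConcreteCategory.congr_hom (Functor.descOfIsLeftKanExtension_fac_app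
      (yoneda.obj (J.obj b)) (yonedaMap J b) (J.op.lan.obj (yoneda.obj b))
      (J.op.lanUnit.app (yoneda.obj b)) (op b)) (𝟙 b)
    simpa [yonedaEquiv, Presheaf.compYonedaIsoYonedaCompLan, Functor.leftKanExtensionUnique,
      yonedaMap] using this
  rw [h1]
  have h2 := ConcreteCategory.congr_hom (congr_app (J.op.lanUnit.naturality s) (op b)) (𝟙 b)
  simp only [Functor.id_obj, Functor.id_map, FunctorToTypes.comp, Functor.whiskeringLeft_obj_obj,
    Functor.comp_map, Functor.whiskeringLeft_obj_map, Functor.whiskerLeft_app] at h2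
  simpa [yonedaEquiv] using h2.symm

lemma exists_hom (M : Bᵒᵖ ⥤ Type u)
    (d : CostructuredArrow yoneda ((J.op.lan).obj M)) :
    ∃ (b : B) (g : d.left ⟶ J.obj b) (y : M.obj (op b)),
      ((J.op.lan).obj M).map g.op ((J.op.lanUnit.app M).app (op b) y) = yonedaEquiv d.hom := by
  obtain ⟨j, y, hy⟩ := Types.jointly_surjective_of_isColimit
    ((Functor.isPointwiseLeftKanExtensionLeftKanExtensionUnit J.op M) (op d.left))
    (yonedaEquiv d.hom)
  exact ⟨j.left.unop, j.hom.unop, y, hy⟩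

end IndLanAux

/-- Along a fully faithful functor, if the left Kan extension of a presheaf is an
ind-object then so is the presheaf itself: the Set-enriched instance of part (2)
of Lemma 2.8 of the paper. -/
theorem isIndObject_of_isIndObject_lan
    {B C : Type u} [SmallCategory B] [SmallCategory C]
    (J : B ⥤ C) [J.Full] [J.Faithful] (M : Bᵒᵖ ⥤ Type u)
    (h : IsIndObject ((J.op.lan).obj M)) :
    IsIndObject M := by
  haveI : IsFiltered (CostructuredArrow yoneda ((J.op.lan).obj M)) := h.isFiltered
  haveI : IsFiltered (CostructuredArrow yoneda M) := by
    refine IsFiltered.of_exists_of_isFiltered_of_fullyFaithful (IndLanAux.phi J M) (fun d => ?_)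
    obtain ⟨b, g, y, hy⟩ := IndLanAux.exists_hom J M d
    refine ⟨CostructuredArrow.mk (yonedaEquiv.symm y), ⟨CostructuredArrow.homMk g ?_⟩⟩
    apply yonedaEquiv.injective
    erw [← yonedaEquiv_naturality, IndLanAux.phi_obj_hom]
    simp only [CostructuredArrow.mk_left, CostructuredArrow.mk_hom_eq_self]
    refine Eq.trans (congrArg ((J.op.lan.obj M).map g.op) ?_) hy
    have h3 := IndLanAux.yonedaEquiv_unit_comp J M b (yonedaEquiv.symm y)
    exact h3.trans (congrArg ((J.op.lanUnit.app M).app (op b)) (Equiv.apply_symm_apply _ _))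
  haveI : FinallySmall.{u} (CostructuredArrow yoneda M) :=
    FinallySmall.mk' (𝟭 _)
  exact isIndObject_of_isFiltered_of_finallySmall M
end

section
/- If J : B ⥤ C is a fully faithful and final functor and C is a filtered category, then B is a filtered category. -/
open CategoryTheory

universe v₁ v₂ u₁ u₂

/-- If `J : B ⥤ C` is fully faithful and final and `C` is filtered, then `B` is
filtered (Remark 2.9 of the paper). -/
theorem isFiltered_of_fullyFaithful_final
    {B : Type u₁} [Category.{v₁} B] {C : Type u₂} [Category.{v₂} C]
    (J : B ⥤ C) [J.Full] [J.Faithful] [J.Final] [IsFiltered C] :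
    IsFiltered B := by
  refine IsFiltered.of_exists_of_isFiltered_of_fullyFaithful J (fun c => ?_)
  obtain ⟨b⟩ : Nonempty (StructuredArrow c J) := Functor.Final.out c |>.is_nonempty
  exact ⟨b.right, ⟨b.hom⟩⟩
end

section
/- Let G be a group. Define the category 𝒩_G whose objects are the natural numbers, with Hom(n, m) equal to the underlying set of G when n < m, equal to the one-element set containing the identity when n = m, and empty when n > m, and where the composite of h : n ⟶ m with g : m ⟶ l (for n < m < l) is g. Then 𝒩_G is a filtered category. -/
open CategoryTheory

universe u

/-- Morphisms of the category `𝒩_G`: there is exactly the identity from `n` to `n`,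
a copy of (the underlying set of) `G` from `n` to `m` whenever `n < m`, and no
morphisms from `n` to `m` when `n > m`. -/
inductive NHom (G : Type u) : ℕ → ℕ → Type u
  | id (n : ℕ) : NHom G n n
  | of {n m : ℕ} (h : n < m) (g : G) : NHom G n m

/-- Composition in `𝒩_G`: identities compose as identities, and the composite of
`h : n ⟶ m` with `g : m ⟶ l` (for `n < m < l`) is `g`. -/
def NHom.comp {G : Type u} : ∀ {n m l : ℕ}, NHom G n m → NHom G m l → NHom G n l
  | _, _, _, .id _, f => f
  | _, _, _, .of h g, .id _ => .of h g
  | _, _, _, .of h₁ _, .of h₂ g₂ => .of (h₁.trans h₂) g₂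

/-- The objects of the category `𝒩_G` are the natural numbers. -/
def NCat (_G : Type u) : Type := ℕ

instance (G : Type u) : Category.{u} (NCat G) where
  Hom n m := NHom G n m
  id n := .id n
  comp f g := f.comp g
  id_comp f := rfl
  comp_id f := by cases f <;> rfl
  assoc f g h := by cases f <;> cases g <;> cases h <;> rfl

/-- The category `𝒩_G` is filtered (the key step in the Section 5 counterexample
of the paper). -/
theorem NCat.isFiltered (G : Type u) [Group G] : IsFiltered (NCat G) := by
  have : IsFilteredOrEmpty (NCat G) := by
    constructor
    · intro n m
      let n' : ℕ := n
      let m' : ℕ := m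
      exact ⟨(max n' m' + 1 : ℕ), .of (Nat.lt_succ_of_le (le_max_left n' m')) 1,
        .of (Nat.lt_succ_of_le (le_max_right n' m')) 1, trivial⟩
    · intro n m f g
      let m' : ℕ := m
      exact ⟨(m' + 1 : ℕ), .of (Nat.lt_succ_self m') 1, by change NHom G n m at f g; cases f <;> cases g <;> rfl⟩
  exact { nonempty := ⟨(0 : ℕ)⟩ }
end

section
/- Let C be a cocomplete category and X an object of C. Then the following are equivalent: (1) for every small category J, every diagram H : J ⥤ C, and every morphism f : X ⟶ colim H, there exist an object j of J and a morphism h : X ⟶ H j such that f equals h followed by the colimit coprojection H j ⟶ colim H; (2) X is regular projective (for every regular epimorphism e : A ⟶ B and every g : X ⟶ B there exists h : X ⟶ A with h ≫ e = g), and every morphism from X into a small coproduct in C factors through one of the coproduct coprojections. -/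
open CategoryTheory CategoryTheory.Limits

universe v u

/-- `Hom(X, -)` is weakly cocontinuous (every morphism into a colimit lifts through
some coprojection) iff `X` is regular projective and every morphism from `X` into a
small coproduct factors through a coprojection. -/
theorem weakly_cocontinuous_iff_regularProjective_and_coproduct_factorization
    {C : Type u} [Category.{v} C] [HasColimits C] (X : C) :
    (∀ (J : Type v) [SmallCategory J] (H : J ⥤ C) (f : X ⟶ colimit H),
        ∃ (j : J) (h : X ⟶ H.obj j), f = h ≫ colimit.ι H j) ↔
      ((∀ (A B : C) (e : A ⟶ B) (_ : RegularEpi e) (g : X ⟶ B),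
          ∃ h : X ⟶ A, h ≫ e = g) ∧
        (∀ (ι : Type v) (fam : ι → C) (g : X ⟶ ∐ fam),
          ∃ (i : ι) (h : X ⟶ fam i), g = h ≫ Sigma.ι fam i)) := by
  constructor
  · intro hyp
    constructor
    · intro A B e he g
      -- realize `B` as a colimit over a small parallel pair
      let J : Type v := AsSmall.{v} WalkingParallelPair
      let H : J ⥤ C := AsSmall.down ⋙ parallelPair he.left he.right
      let c' : Cocone H := (Cofork.ofπ e he.w).whisker AsSmall.down
      let hc' : IsColimit c' := he.isColimit.whiskerEquivalence AsSmall.equiv.symm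
      let iso : colimit H ≅ B := (colimit.isColimit H).coconePointUniqueUpToIso hc'
      have hfacι : ∀ j : J, colimit.ι H j ≫ iso.hom = c'.ι.app j := fun j =>
        (colimit.isColimit H).comp_coconePointUniqueUpToIso_hom hc' j
      obtain ⟨j, h, hf⟩ := hyp J H (g ≫ iso.inv)
      have hfac : h ≫ c'.ι.app j = g := by
        rw [← hfacι, ← Category.assoc, ← hf, Category.assoc, iso.inv_hom_id,
          Category.comp_id]
      obtain ⟨jd⟩ := j
      cases jd with
      | zero => exact ⟨h ≫ he.left, (Category.assoc _ _ _).trans hfac⟩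
      | one => exact ⟨h, hfac⟩
    · intro ι fam g
      obtain ⟨⟨i⟩, h, hf⟩ := hyp (Discrete ι) (Discrete.functor fam) g
      exact ⟨i, h, hf⟩
  · rintro ⟨hproj, hcop⟩ J _ H f
    -- colimit H is a coequalizer of maps between coproducts
    let K := (p : J × J) × (p.1 ⟶ p.2)
    let fam : K → C := fun k => H.obj k.1.1
    let s : ∐ fam ⟶ ∐ H.obj :=
      Sigma.desc fun k => H.map k.2 ≫ Sigma.ι H.obj k.1.2
    let t : ∐ fam ⟶ ∐ H.obj := Sigma.desc fun k => Sigma.ι H.obj k.1.1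
    let π : ∐ H.obj ⟶ colimit H := Sigma.desc (colimit.ι H)
    have hιπ : ∀ j : J, Sigma.ι H.obj j ≫ π = colimit.ι H j := fun j =>
      Sigma.ι_desc _ _
    have w : s ≫ π = t ≫ π := by
      apply Sigma.hom_ext
      intro k
      rw [← Category.assoc, ← Category.assoc, Sigma.ι_desc, Sigma.ι_desc,
        Category.assoc, hιπ, hιπ, colimit.w]
    have hre : RegularEpi π := by
      refine ⟨∐ fam, s, t, w, Cofork.IsColimit.mk _ ?_ ?_ ?_⟩
      · intro c
        refine colimit.desc H ⟨c.pt, fun j => Sigma.ι H.obj j ≫ c.π, ?_⟩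
        intro j j' φ
        have := Sigma.ι fam ⟨(j, j'), φ⟩ ≫= c.condition
        rw [← Category.assoc, ← Category.assoc, Sigma.ι_desc, Sigma.ι_desc,
          Category.assoc] at this
        simpa using this
      · intro c
        apply Sigma.hom_ext
        intro j
        rw [Cofork.π_ofπ, ← Category.assoc, hιπ, colimit.ι_desc]
      · intro c m hm
        refine colimit.hom_ext (F := H) (f := m) fun j => ?_
        rw [colimit.ι_desc, ← hιπ, Category.assoc, Cofork.π_ofπ] at *
        rw [hm]
    obtain ⟨g0, hg0⟩ := hproj _ _ π hre f
    obtain ⟨i, h, hi⟩ := hcop J H.obj g0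
    exact ⟨i, h, by rw [← hg0, hi, Category.assoc, hιπ]⟩
end
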